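/- arXiv:2302.12736 — 3 statements merged into one kernel-verified Lean document; each statement's English description precedes it below -/
import Mathlib

section
/- With probability at least 1 - ε over the realization of (D_1,...,D_n), the true target revenue R satisfies R ≥ R̂(w) - Bern(w, r), where Bern(w,r) := b(w)^T (r - r̂) + sqrt(2 Var(w,r) log(1/ε)) + (1/(3n)) max_{1≤i≤n} |w_i| p_i log(1/ε). -/
/-!
Each summand `X i = w i * (p i * D i - r i)` is centred, bounded above by
`M = max_i |w i| * p i` and has variance `w i ^ 2 * r i * (p i - r i)`. The elementary bound
`e^u - 1 - u ≤ u² / (2 (1 - A / 3))` for `u ≤ A < 3` makes each summand sub-gamma with scale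
`M / 3`, independence adds the variance factors, and the Chernoff bound at the optimal `t` puts
mass at most `ε` above `√(2 V log (1/ε)) + (M / 3) log (1/ε)`. Dividing by `n`, the complement
of that tail event is the revenue event.
-/

open MeasureTheory ProbabilityTheory Finset Real

lemma exp_le_one_add_add_sq_div_two_of_nonpos {u : ℝ} (hu : u ≤ 0) :
    exp u ≤ 1 + u + u ^ 2 / 2 := by
  have h := quadratic_le_exp_of_nonneg (neg_nonneg.mpr hu)
  rw [exp_neg, ← one_div, le_div_iff₀ (exp_pos u)] at h
  -- `(1 - u + u²/2)(1 + u + u²/2) = 1 + u⁴/4 ≥ 1`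
  nlinarith [exp_pos u, pow_two_nonneg (u ^ 2)]

lemma nonneg_of_hasDerivAt_of_nonneg {f f' : ℝ → ℝ} (hf : ∀ x, HasDerivAt f (f' x) x)
    (hf0 : f 0 = 0) (hf' : ∀ x, 0 ≤ x → 0 ≤ f' x) {x : ℝ} (hx : 0 ≤ x) : 0 ≤ f x := by
  have hmono : MonotoneOn f (Set.Ici 0) :=
    monotoneOn_of_hasDerivWithinAt_nonneg (convex_Ici 0)
      (fun y _ => (hf y).continuousAt.continuousWithinAt) (fun y _ => (hf y).hasDerivWithinAt)
      (fun y hy => hf' y (by rw [interior_Ici] at hy; exact le_of_lt hy))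
  simpa [hf0] using hmono Set.self_mem_Ici hx hx

lemma one_sub_div_three_mul_exp_sub_one_sub_le {u : ℝ} (hu : 0 ≤ u) :
    (1 - u / 3) * (exp u - 1 - u) ≤ u ^ 2 / 2 := by
  have hg' : ∀ y, HasDerivAt (fun y => y + 2 + (y - 2) * exp y) (1 + (y - 1) * exp y) y :=
    fun y => (((hasDerivAt_id' y).add_const 2).add
      (((hasDerivAt_id' y).sub_const 2).mul (hasDerivAt_exp y))).congr_deriv (by ring)
  have hg : ∀ x, 0 ≤ x → 0 ≤ x + 2 + (x - 2) * exp x := fun x hx =>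
    nonneg_of_hasDerivAt_of_nonneg hg' (by norm_num) (fun y _ => by
      have h : exp (-y) * exp y = 1 := by rw [← exp_add, neg_add_cancel, exp_zero]
      nlinarith [add_one_le_exp (-y), exp_pos y]) hx
  have hf : ∀ x, HasDerivAt (fun x => x ^ 2 / 2 - (1 - x / 3) * (exp x - 1 - x))
      ((x + 2 + (x - 2) * exp x) / 3) x := fun x =>
    (((hasDerivAt_pow 2 x).div_const 2).sub
      ((((hasDerivAt_id' x).div_const 3).const_sub 1).mul
        (((hasDerivAt_exp x).sub_const 1).sub (hasDerivAt_id' x)))).congr_deriv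
      (by simp only [Pi.sub_apply]; push_cast; ring)
  simpa using nonneg_of_hasDerivAt_of_nonneg hf (by simp)
    (fun x hx => div_nonneg (hg x hx) (by norm_num)) hu

lemma exp_sub_one_sub_le_sq_div {u A : ℝ} (huA : u ≤ A) (hA0 : 0 ≤ A) (hA3 : A < 3) :
    exp u - 1 - u ≤ u ^ 2 / (2 * (1 - A / 3)) := by
  rw [le_div_iff₀ (by linarith)]
  rcases le_or_gt u 0 with hu | hu
  · nlinarith [exp_le_one_add_add_sq_div_two_of_nonpos hu, sq_nonneg u]
  · nlinarith [one_sub_div_three_mul_exp_sub_one_sub_le hu.le, add_one_le_exp u]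

section Subgamma

variable {Ω : Type*} [MeasurableSpace Ω] {μ : Measure Ω}

/-- Right-tail sub-gamma condition with variance factor `v` and scale `c`
(Boucheron–Lugosi–Massart, *Concentration Inequalities*, §2.4). -/
def HasSubgammaMGF (X : Ω → ℝ) (v c : ℝ) (μ : Measure Ω) : Prop :=
  ∀ t, 0 < t → c * t < 1 →
    Integrable (fun ω => exp (t * X ω)) μ ∧ mgf X μ t ≤ exp (t ^ 2 * v / (2 * (1 - c * t)))

lemma HasSubgammaMGF.mono {X : Ω → ℝ} {v v' c : ℝ} (h : HasSubgammaMGF X v c μ) (hv : v ≤ v') :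
    HasSubgammaMGF X v' c μ := fun t ht hct =>
  ⟨(h t ht hct).1, (h t ht hct).2.trans <| exp_le_exp.mpr <| by gcongr⟩

lemma hasSubgammaMGF_of_le [IsProbabilityMeasure μ] {X : Ω → ℝ} {b : ℝ} (hX : MemLp X 2 μ)
    (hXb : ∀ᵐ ω ∂μ, X ω ≤ b) (hX0 : ∫ ω, X ω ∂μ = 0) :
    HasSubgammaMGF X (∫ ω, X ω ^ 2 ∂μ) (b / 3) μ := by
  intro t ht hbt
  have hint : Integrable X μ := hX.integrable one_le_two
  have hb : 0 ≤ b := by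
    simpa [hX0] using integral_mono_ae hint (integrable_const b) hXb
  have hexp_int : Integrable (fun ω => exp (t * X ω)) μ := by
    refine (integrable_const (exp (t * b))).mono'
      (continuous_exp.comp_aestronglyMeasurable (hX.1.const_mul t)) ?_
    filter_upwards [hXb] with ω hω
    rw [norm_eq_abs, abs_of_pos (exp_pos _)]
    exact exp_le_exp.mpr (by gcongr)
  refine ⟨hexp_int, ?_⟩
  set d := 2 * (1 - b / 3 * t)
  have hquad : Integrable (fun ω => 1 + t * X ω + t ^ 2 / d * X ω ^ 2) μ :=
    ((integrable_const 1).add (hint.const_mul t)).add (hX.integrable_sq.const_mul _)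
  calc mgf X μ t ≤ ∫ ω, (1 + t * X ω + t ^ 2 / d * X ω ^ 2) ∂μ := by
        refine integral_mono_ae hexp_int hquad ?_
        filter_upwards [hXb] with ω hω
        have := exp_sub_one_sub_le_sq_div (mul_le_mul_of_nonneg_left hω ht.le)
          (mul_nonneg ht.le hb) (by linarith)
        have hd : (t * X ω) ^ 2 / (2 * (1 - t * b / 3)) = t ^ 2 / d * X ω ^ 2 := by ring
        linarith
    _ = 1 + t ^ 2 * (∫ ω, X ω ^ 2 ∂μ) / d := by
        rw [integral_add (f := fun ω => 1 + t * X ω) ((integrable_const 1).add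
          (hint.const_mul t)) (hX.integrable_sq.const_mul _),
          integral_add (f := fun _ => (1 : ℝ)) (integrable_const 1) (hint.const_mul t),
          integral_const_mul, integral_const_mul, hX0]
        simp only [integral_const, probReal_univ, smul_eq_mul, mul_one, mul_zero, add_zero]
        ring
    _ ≤ _ := by linarith [add_one_le_exp (t ^ 2 * (∫ ω, X ω ^ 2 ∂μ) / d)]

lemma ProbabilityTheory.iIndepFun.hasSubgammaMGF_sum {ι : Type*} {X : ι → Ω → ℝ}
    (h_indep : iIndepFun X μ) (h_meas : ∀ i, Measurable (X i)) (s : Finset ι) {v : ι → ℝ} {c : ℝ}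
    (h : ∀ i ∈ s, HasSubgammaMGF (X i) (v i) c μ) :
    HasSubgammaMGF (∑ i ∈ s, X i) (∑ i ∈ s, v i) c μ := by
  have := h_indep.isProbabilityMeasure
  intro t ht hct
  refine ⟨h_indep.integrable_exp_mul_sum h_meas fun i hi => (h i hi t ht hct).1, ?_⟩
  calc mgf (∑ i ∈ s, X i) μ t = ∏ i ∈ s, mgf (X i) μ t := h_indep.mgf_sum h_meas s
    _ ≤ ∏ i ∈ s, exp (t ^ 2 * v i / (2 * (1 - c * t))) :=
        prod_le_prod (fun _ _ => mgf_nonneg) fun i hi => (h i hi t ht hct).2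
    _ = exp (t ^ 2 * (∑ i ∈ s, v i) / (2 * (1 - c * t))) := by
        rw [← exp_sum, ← sum_div, ← mul_sum]

lemma HasSubgammaMGF.measure_ge_le [IsFiniteMeasure μ] {X : Ω → ℝ} {v c L : ℝ}
    (h : HasSubgammaMGF X v c μ) (hv : 0 < v) (hc : 0 ≤ c) (hL : 0 < L) :
    μ.real {ω | √(2 * v * L) + c * L ≤ X ω} ≤ exp (-L) := by
  set σ := √(2 * v * L)
  have hσ : 0 < σ := sqrt_pos.mpr (by positivity)
  have hσ2 : σ ^ 2 = 2 * v * L := sq_sqrt (by positivity)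
  have hd : 0 < v + c * σ := by positivity
  set t := σ / (v + c * σ)
  have ht : 0 < t := by positivity
  have hct : c * t < 1 := by
    rw [mul_div_assoc', div_lt_one hd]; linarith
  obtain ⟨hint, hmgf⟩ := h t ht hct
  calc μ.real {ω | σ + c * L ≤ X ω} ≤ exp (-t * (σ + c * L)) * mgf X μ t :=
        measure_ge_le_exp_mul_mgf _ ht.le hint
    _ ≤ exp (-t * (σ + c * L)) * exp (t ^ 2 * v / (2 * (1 - c * t))) := by gcongr
    _ = exp (-L) := by
        rw [← exp_add]
        congr 1
        have h1 : 1 - c * t = v / (v + c * σ) := by simp only [t]; field_simp; ring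
        rw [h1]
        simp only [t]
        field_simp
        linear_combination -hσ2

lemma measure_lt_le_of_forall_pos {X : Ω → ℝ} {a : ℝ} {m : ENNReal}
    (h : ∀ δ > 0, μ {ω | a + δ ≤ X ω} ≤ m) : μ {ω | a < X ω} ≤ m := by
  have hunion : {ω | a < X ω} = ⋃ k : ℕ, {ω | a + 1 / (k + 1) ≤ X ω} := by
    ext ω
    simp only [Set.mem_ofPred_eq, Set.mem_iUnion]
    refine ⟨fun hω => ?_, fun ⟨k, hk⟩ => (lt_add_of_pos_right a (by positivity)).trans_le hk⟩
    obtain ⟨k, hk⟩ := exists_nat_one_div_lt (sub_pos.mpr hω)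
    exact ⟨k, by linarith⟩
  have hmono : Monotone fun k : ℕ => {ω | a + 1 / ((k : ℝ) + 1) ≤ X ω} := fun k l hkl ω hω =>
    (show a + 1 / ((l : ℝ) + 1) ≤ a + 1 / ((k : ℝ) + 1) by gcongr).trans hω
  rw [hunion, hmono.measure_iUnion]
  exact iSup_le fun k => h _ (by positivity)

/-- Approximating `v` from above by `v' > 0` also covers `v = 0`, at the price of the strict
inequality. -/
lemma HasSubgammaMGF.measure_gt_le [IsFiniteMeasure μ] {X : Ω → ℝ} {v c L : ℝ}
    (h : HasSubgammaMGF X v c μ) (hv : 0 ≤ v) (hc : 0 ≤ c) (hL : 0 < L) :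
    μ {ω | √(2 * v * L) + c * L < X ω} ≤ ENNReal.ofReal (exp (-L)) := by
  refine measure_lt_le_of_forall_pos fun δ hδ => ?_
  set v' := (√(2 * v * L) + δ) ^ 2 / (2 * L)
  have hv' : 0 < v' := by positivity
  have hvv' : v ≤ v' := by
    rw [le_div_iff₀ (by positivity)]
    nlinarith [sq_sqrt (by positivity : 0 ≤ 2 * v * L), sqrt_nonneg (2 * v * L)]
  have hσ' : √(2 * v' * L) = √(2 * v * L) + δ := by
    rw [show 2 * v' * L = (√(2 * v * L) + δ) ^ 2 by simp only [v']; field_simp]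
    exact sqrt_sq (by positivity)
  have := (h.mono hvv').measure_ge_le hv' hc hL
  rw [hσ', add_right_comm] at this
  exact (ENNReal.le_ofReal_iff_toReal_le (measure_ne_top _ _) (exp_pos _).le).mpr this

lemma abs_mul_mul_sub_le {d p r w : ℝ} (hd : d = 0 ∨ d = 1) (hr0 : 0 ≤ r) (hrp : r ≤ p) :
    |w * (p * d - r)| ≤ |w| * p := by
  rw [abs_mul]
  refine mul_le_mul_of_nonneg_left (abs_le.mpr ?_) (abs_nonneg w)
  rcases hd with rfl | rfl <;> constructor <;> linarith

lemma hasSubgammaMGF_mul_bernoulli_sub [IsProbabilityMeasure μ] {D : Ω → ℝ} (hD : Measurable D)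
    (hD01 : ∀ ω, D ω = 0 ∨ D ω = 1) {p r w b : ℝ} (hp : 0 < p) (hr0 : 0 ≤ r) (hrp : r ≤ p)
    (hmean : ∫ ω, D ω ∂μ = r / p) (hb : |w| * p ≤ b) :
    HasSubgammaMGF (fun ω => w * (p * D ω - r)) (w ^ 2 * r * (p - r)) (b / 3) μ := by
  have hbound (ω : Ω) : |w * (p * D ω - r)| ≤ |w| * p := abs_mul_mul_sub_le (hD01 ω) hr0 hrp
  have hDint : Integrable D μ := by
    refine (integrable_const (1 : ℝ)).mono' hD.aestronglyMeasurable (ae_of_all _ fun ω => ?_)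
    rcases hD01 ω with h | h <;> simp [h]
  have hX : MemLp (fun ω => w * (p * D ω - r)) 2 μ :=
    MemLp.of_bound (by fun_prop) _ (ae_of_all _ hbound)
  have hX0 : ∫ ω, w * (p * D ω - r) ∂μ = 0 := by
    rw [integral_const_mul, integral_sub (hDint.const_mul p) (integrable_const r),
      integral_const_mul, hmean, mul_div_cancel₀ r hp.ne', integral_const, probReal_univ,
      smul_eq_mul, one_mul, sub_self, mul_zero]
  have hsq (ω : Ω) :
      (w * (p * D ω - r)) ^ 2 = w ^ 2 * (p ^ 2 - 2 * p * r) * D ω + w ^ 2 * r ^ 2 := by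
    rcases hD01 ω with h | h <;> rw [h] <;> ring
  have hX2 : ∫ ω, (w * (p * D ω - r)) ^ 2 ∂μ = w ^ 2 * r * (p - r) := by
    simp_rw [hsq]
    rw [integral_add (hDint.const_mul _) (integrable_const _), integral_const_mul, hmean,
      integral_const, probReal_univ, smul_eq_mul, one_mul]
    field_simp
    ring
  simpa only [hX2] using
    hasSubgammaMGF_of_le hX (ae_of_all _ fun ω => (le_abs_self _).trans ((hbound ω).trans hb)) hX0

lemma ofReal_one_sub_le_measure_compl [IsProbabilityMeasure μ] {s : Set Ω} {ε : ℝ} (hε : 0 ≤ ε)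
    (hs : μ s ≤ ENNReal.ofReal ε) : ENNReal.ofReal (1 - ε) ≤ μ sᶜ :=
  calc ENNReal.ofReal (1 - ε) = μ Set.univ - ENNReal.ofReal ε := by
        rw [ENNReal.ofReal_sub _ hε, ENNReal.ofReal_one, measure_univ]
    _ ≤ μ Set.univ - μ s := tsub_le_tsub_left hs _
    _ ≤ μ sᶜ := tsub_le_iff_left.mpr (measure_univ_le_add_compl s)

end Subgamma

lemma revenue_lower_bound_of_sum_le (n : ℕ) (p r rhat w d : ℕ → ℝ) {V M L : ℝ}
    (h : ∑ i ∈ range n, w i * (p i * d i - r i) ≤ √(2 * V * L) + M / 3 * L) :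
    ((1 : ℝ) / n) * ∑ i ∈ range n, r (n + i) ≥
      (((1 : ℝ) / n) * ∑ i ∈ range n, w i * (p i * d i - rhat i)
          + ((1 : ℝ) / n) * ∑ i ∈ range n, rhat (n + i))
        - ((((1 : ℝ) / n) * ∑ i ∈ range n, w i * (r i - rhat i)
              - ((1 : ℝ) / n) * ∑ i ∈ range n, (r (n + i) - rhat (n + i)))
            + √(2 * (((1 : ℝ) / (n : ℝ) ^ 2) * V) * L)
            + (1 / (3 * (n : ℝ))) * M * L) := by
  have hS : ∑ i ∈ range n, w i * (p i * d i - rhat i) - ∑ i ∈ range n, w i * (r i - rhat i)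
      = ∑ i ∈ range n, w i * (p i * d i - r i) := by
    rw [← sum_sub_distrib]
    exact sum_congr rfl fun i _ => by ring
  have hsqrt : √(2 * ((1 / (n : ℝ) ^ 2) * V) * L) = 1 / n * √(2 * V * L) := by
    rw [show 2 * ((1 / (n : ℝ) ^ 2) * V) * L = 2 * V * L / n ^ 2 by ring,
      sqrt_div' _ (by positivity), sqrt_sq (Nat.cast_nonneg n)]
    ring
  have hscaled := mul_le_mul_of_nonneg_left h (by positivity : (0 : ℝ) ≤ 1 / n)
  rw [sum_sub_distrib, hsqrt, ge_iff_le]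
  linear_combination hscaled + 1 / (n : ℝ) * hS

theorem stmt_2_general {Ω : Type*} [MeasurableSpace Ω] (μ : Measure Ω) [IsProbabilityMeasure μ]
    (n : ℕ) (ε : ℝ) (hε0 : 0 < ε) (hε1 : ε < 1)
    (p r rhat w : ℕ → ℝ)
    (hp : ∀ i < 2 * n, 0 < p i)
    (hbox : ∀ i < 2 * n, 0 ≤ r i ∧ r i ≤ p i)
    (D : ℕ → Ω → ℝ)
    (hmeas : ∀ i < n, Measurable (D i))
    (hindep : iIndepFun (fun i : Fin n => D i) μ)
    (hbern : ∀ i < n, ∀ ω, D i ω = 0 ∨ D i ω = 1)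
    (hmean : ∀ i < n, ∫ ω, D i ω ∂μ = r i / p i) :
    ENNReal.ofReal (1 - ε) ≤
      μ {ω | ((1 : ℝ) / n) * ∑ i ∈ range n, r (n + i) ≥
        (((1 : ℝ) / n) * ∑ i ∈ range n, w i * (p i * D i ω - rhat i)
          + ((1 : ℝ) / n) * ∑ i ∈ range n, rhat (n + i))
        - ((((1 : ℝ) / n) * ∑ i ∈ range n, w i * (r i - rhat i)
              - ((1 : ℝ) / n) * ∑ i ∈ range n, (r (n + i) - rhat (n + i)))
            + Real.sqrt (2 * (((1 : ℝ) / (n : ℝ) ^ 2) *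
                ∑ i ∈ range n, (w i) ^ 2 * r i * (p i - r i)) * Real.log (1 / ε))
            + (1 / (3 * (n : ℝ))) * (⨆ i : Fin n, |w (i : ℕ)| * p (i : ℕ)) *
                Real.log (1 / ε))} := by
  set L := Real.log (1 / ε) with hLdef
  set M := ⨆ i : Fin n, |w (i : ℕ)| * p (i : ℕ)
  have hL : 0 < L := log_pos (one_lt_one_div hε0 hε1)
  have hexpL : exp (-L) = ε := by rw [hLdef, one_div, log_inv, neg_neg, exp_log hε0]
  have h2n (i : Fin n) : (i : ℕ) < 2 * n := by omega
  have hM (i : Fin n) : |w i| * p i ≤ M :=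
    le_ciSup (f := fun i : Fin n => |w i| * p i) (Set.finite_range _).bddAbove i
  have hM0 : 0 ≤ M := Real.iSup_nonneg fun i => mul_nonneg (abs_nonneg _) (hp i (h2n i)).le
  have hV0 : 0 ≤ ∑ i : Fin n, w i ^ 2 * r i * (p i - r i) := sum_nonneg fun i _ => by
    obtain ⟨hr0, hrp⟩ := hbox i (h2n i)
    have := sub_nonneg.mpr hrp
    positivity
  set X : Fin n → Ω → ℝ := fun i ω => w i * (p i * D i ω - r i)
  have hX_indep : iIndepFun X μ :=
    hindep.comp (fun i x => w i * (p i * x - r i)) fun i => by fun_prop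
  have hsum : HasSubgammaMGF (∑ i, X i) (∑ i : Fin n, w i ^ 2 * r i * (p i - r i)) (M / 3) μ :=
    hX_indep.hasSubgammaMGF_sum (fun i => by have := hmeas i i.2; fun_prop) univ fun i _ =>
      hasSubgammaMGF_mul_bernoulli_sub (hmeas i i.2) (hbern i i.2) (hp i (h2n i))
        (hbox i (h2n i)).1 (hbox i (h2n i)).2 (hmean i i.2) (hM i)
  have htail := hsum.measure_gt_le hV0 (by positivity) hL
  rw [hexpL] at htail
  refine (ofReal_one_sub_le_measure_compl hε0.le htail).trans (measure_mono fun ω hω => ?_)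
  simp only [Set.mem_compl_iff, Set.mem_ofPred_eq, not_lt, Finset.sum_apply, X] at hω
  rw [Fin.sum_univ_eq_sum_range (fun i => w i ^ 2 * r i * (p i - r i)),
    Fin.sum_univ_eq_sum_range (fun i => w i * (p i * D i ω - r i))] at hω
  exact revenue_lower_bound_of_sum_le n p r rhat w (fun i => D i ω) hω

/-- Revenue lower bound via Bernstein's inequality: with probability at least `1 - ε`,
`R ≥ R̂(w) - Bern(w, r)`. -/
theorem stmt_2 {Ω : Type*} [MeasurableSpace Ω] (μ : Measure Ω) [IsProbabilityMeasure μ]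
    (n : ℕ) (hn : 1 ≤ n) (ε : ℝ) (hε0 : 0 < ε) (hε1 : ε < 1)
    (p r rhat w : ℕ → ℝ)
    (hp : ∀ i < 2 * n, 0 < p i)
    (hbox : ∀ i < 2 * n, 0 ≤ r i ∧ r i ≤ p i)
    (D : ℕ → Ω → ℝ)
    (hmeas : ∀ i < n, Measurable (D i))
    (hindep : iIndepFun (fun i : Fin n => D i) μ)
    (hbern : ∀ i < n, ∀ ω, D i ω = 0 ∨ D i ω = 1)
    (hmean : ∀ i < n, ∫ ω, D i ω ∂μ = r i / p i) :
    ENNReal.ofReal (1 - ε) ≤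
      μ {ω | ((1 : ℝ) / n) * ∑ i ∈ range n, r (n + i) ≥
        (((1 : ℝ) / n) * ∑ i ∈ range n, w i * (p i * D i ω - rhat i)
          + ((1 : ℝ) / n) * ∑ i ∈ range n, rhat (n + i))
        - ((((1 : ℝ) / n) * ∑ i ∈ range n, w i * (r i - rhat i)
              - ((1 : ℝ) / n) * ∑ i ∈ range n, (r (n + i) - rhat (n + i)))
            + Real.sqrt (2 * (((1 : ℝ) / (n : ℝ) ^ 2) *
                ∑ i ∈ range n, (w i) ^ 2 * r i * (p i - r i)) * Real.log (1 / ε))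
            + (1 / (3 * (n : ℝ))) * (⨆ i : Fin n, |w (i : ℕ)| * p (i : ℕ)) *
                Real.log (1 / ε))} :=
  stmt_2_general μ n ε hε0 hε1 p r rhat w hp hbox D hmeas hindep hbern hmean
end

section
/- For any w ∈ ℝ^n and the true revenue vector r = r̂ + Δ with Δ^T G^{-1} Δ = Γ², we have MSE(w, r) ≤ max(1, Γ²/Γ̂²) · WCMSE(w; Γ̂), where WCMSE(w; Γ̂) is the maximum of (b(w)^T(r'-r̂))² + Var(w, r') over all r' satisfying 0 ≤ r' ≤ p and (r'-r̂)^T G^{-1}(r'-r̂) ≤ Γ̂². -/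
/-!
Shrinking the perturbation `Δ` to `Δ / s` with `s = max 1 (Γ / Γ̂)` lands in the feasible set
of the worst case. The bias term scales exactly by `1 / s²`, and the variance term by at least
`1 / s²` since `x (p - x)` is concave and nonnegative on `[0, p]`; hence
`MSE(w, r̂ + Δ) ≤ s² MSE(w, r̂ + Δ / s) ≤ s² WCMSE(w; Γ̂)`.
-/

open Matrix Finset

/-- `MSE(w, r) = (b(w)ᵀ(r - r̂))² + Var(w, r)` for `r ∈ ℝ^{2n}`. -/
noncomputable def mseFn (n : ℕ) (w : Fin n → ℝ) (p rhat : Fin (n + n) → ℝ)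
    (r : Fin (n + n) → ℝ) : ℝ :=
  (((1 : ℝ) / n) * ∑ i : Fin n, w i * (r (Fin.castAdd n i) - rhat (Fin.castAdd n i))
      - ((1 : ℝ) / n) * ∑ i : Fin n, (r (Fin.natAdd n i) - rhat (Fin.natAdd n i))) ^ 2
    + ((1 : ℝ) / (n : ℝ) ^ 2) * ∑ i : Fin n, (w i) ^ 2 * r (Fin.castAdd n i) *
        (p (Fin.castAdd n i) - r (Fin.castAdd n i))

/-- With `f x = x (p - x)`: `f (a + t δ) ≥ (1 - t) f a + t f (a + δ) ≥ t² f (a + δ)` by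
concavity and nonnegativity of `f` on `[0, p]`. -/
lemma sq_mul_mul_sub_le_mul_sub {a δ p t : ℝ} (ha : 0 ≤ a) (hap : a ≤ p)
    (haδ : 0 ≤ a + δ) (haδp : a + δ ≤ p) (ht : 0 ≤ t) (ht1 : t ≤ 1) :
    t ^ 2 * ((a + δ) * (p - (a + δ))) ≤ (a + t * δ) * (p - (a + t * δ)) := by
  nlinarith [mul_nonneg (mul_nonneg ha (sub_nonneg.2 hap)) (sub_nonneg.2 ht1),
    mul_nonneg (mul_nonneg haδ (sub_nonneg.2 haδp)) (mul_nonneg ht (sub_nonneg.2 ht1)),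
    mul_nonneg ht (sub_nonneg.2 ht1), sq_nonneg δ]

lemma smul_dotProduct_mulVec_smul {m : Type*} [Fintype m] (A : Matrix m m ℝ) (v : m → ℝ)
    (t : ℝ) :
    (t • v) ⬝ᵥ (A *ᵥ (t • v)) = t ^ 2 * (v ⬝ᵥ (A *ᵥ v)) := by
  rw [mulVec_smul, smul_dotProduct, dotProduct_smul, smul_eq_mul, smul_eq_mul]
  ring

section Scaling

variable {n : ℕ} (w : Fin n → ℝ) {p rhat : Fin (n + n) → ℝ}

lemma bddAbove_mseFn_image {S : Set (Fin (n + n) → ℝ)}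
    (hS : ∀ r ∈ S, ∀ i, 0 ≤ r i ∧ r i ≤ p i) : BddAbove (mseFn n w p rhat '' S) := by
  have hcont : Continuous (mseFn n w p rhat) := by unfold mseFn; fun_prop
  refine ((isCompact_Icc (a := 0) (b := p)).image hcont).bddAbove.mono
    (Set.image_mono fun r hr => Set.mem_Icc.2 ⟨fun i => (hS r hr i).1, fun i => (hS r hr i).2⟩)

lemma sq_mul_mseFn_add_le_mseFn_add_mul {Δ : Fin (n + n) → ℝ}
    (hrhat : ∀ i, 0 ≤ rhat i ∧ rhat i ≤ p i)
    (hr : ∀ i, 0 ≤ rhat i + Δ i ∧ rhat i + Δ i ≤ p i) {t : ℝ} (ht : 0 ≤ t) (ht1 : t ≤ 1) :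
    t ^ 2 * mseFn n w p rhat (fun i => rhat i + Δ i)
      ≤ mseFn n w p rhat (fun i => rhat i + t * Δ i) := by
  unfold mseFn
  simp only [add_sub_cancel_left, mul_left_comm _ t, ← mul_sum]
  rw [mul_add]
  refine add_le_add (le_of_eq (by ring)) ?_
  rw [mul_left_comm, mul_sum]
  refine mul_le_mul_of_nonneg_left (sum_le_sum fun i _ => ?_) (by positivity)
  have hi := sq_mul_mul_sub_le_mul_sub (hrhat (Fin.castAdd n i)).1 (hrhat (Fin.castAdd n i)).2
    (hr (Fin.castAdd n i)).1 (hr (Fin.castAdd n i)).2 ht ht1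
  linarith [mul_le_mul_of_nonneg_left hi (sq_nonneg (w i))]

end Scaling

theorem stmt_9_general (n : ℕ)
    (p rhat Δ : Fin (n + n) → ℝ)
    (G : Matrix (Fin (n + n)) (Fin (n + n)) ℝ)
    (hrhat : ∀ i, 0 ≤ rhat i ∧ rhat i ≤ p i)
    (hr : ∀ i, 0 ≤ rhat i + Δ i ∧ rhat i + Δ i ≤ p i)
    (Γ Γhat : ℝ) (hΓ : 0 < Γ) (hΓhat : 0 < Γhat)
    (hΔ : Δ ⬝ᵥ (G⁻¹ *ᵥ Δ) = Γ ^ 2)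
    (w : Fin n → ℝ) :
    mseFn n w p rhat (fun i => rhat i + Δ i)
      ≤ max 1 (Γ ^ 2 / Γhat ^ 2) *
          sSup (mseFn n w p rhat ''
            {r | (∀ i, 0 ≤ r i ∧ r i ≤ p i) ∧
              (r - rhat) ⬝ᵥ (G⁻¹ *ᵥ (r - rhat)) ≤ Γhat ^ 2}) := by
  set S : Set (Fin (n + n) → ℝ) := {r | (∀ i, 0 ≤ r i ∧ r i ≤ p i) ∧
    (r - rhat) ⬝ᵥ (G⁻¹ *ᵥ (r - rhat)) ≤ Γhat ^ 2}
  set s := max 1 (Γ / Γhat)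
  have hs : 1 ≤ s := le_max_left _ _
  have hs_sq : s ^ 2 = max 1 (Γ ^ 2 / Γhat ^ 2) := by
    rw [pow_left_monotoneOn.map_max zero_le_one (div_nonneg hΓ.le hΓhat.le), one_pow, div_pow]
  have hΓs : Γ ≤ s * Γhat := (div_le_iff₀ hΓhat).1 (le_max_right _ _)
  have hmem : (fun i => rhat i + s⁻¹ * Δ i) ∈ S := by
    refine ⟨fun i => (convex_Icc 0 (p i)).add_smul_mem (hrhat i) (hr i)
      ⟨by positivity, inv_le_one_of_one_le₀ hs⟩, ?_⟩
    have hsub : (fun i => rhat i + s⁻¹ * Δ i) - rhat = s⁻¹ • Δ := by ext i; simp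
    rw [hsub, smul_dotProduct_mulVec_smul, hΔ, ← mul_pow]
    exact pow_le_pow_left₀ (by positivity) ((inv_mul_le_iff₀ (by positivity)).2 hΓs) 2
  calc mseFn n w p rhat (fun i => rhat i + Δ i)
      = s ^ 2 * ((s⁻¹) ^ 2 * mseFn n w p rhat (fun i => rhat i + Δ i)) := by
        field_simp
    _ ≤ s ^ 2 * mseFn n w p rhat (fun i => rhat i + s⁻¹ * Δ i) := by
        gcongr
        exact sq_mul_mseFn_add_le_mseFn_add_mul w hrhat hr (by positivity)
          (inv_le_one_of_one_le₀ hs)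
    _ ≤ s ^ 2 * sSup (mseFn n w p rhat '' S) := by
        gcongr
        exact le_csSup (bddAbove_mseFn_image w fun r hr => hr.1) (Set.mem_image_of_mem _ hmem)
    _ = _ := by rw [hs_sq]

/-- `MSE(w, r̂ + Δ) ≤ max(1, Γ²/Γ̂²) · WCMSE(w; Γ̂)` where `WCMSE` is the worst case of the
MSE over the box-and-ellipsoid feasible set of revenue vectors. -/
theorem stmt_9 (n : ℕ) (hn : 1 ≤ n)
    (p rhat Δ : Fin (n + n) → ℝ)
    (G : Matrix (Fin (n + n)) (Fin (n + n)) ℝ) (hG : G.PosDef)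
    (hp : ∀ i, 0 ≤ p i) (hrhat : ∀ i, 0 ≤ rhat i ∧ rhat i ≤ p i)
    (hr : ∀ i, 0 ≤ rhat i + Δ i ∧ rhat i + Δ i ≤ p i)
    (Γ Γhat : ℝ) (hΓ : 0 < Γ) (hΓhat : 0 < Γhat)
    (hΔ : Δ ⬝ᵥ (G⁻¹ *ᵥ Δ) = Γ ^ 2)
    (w : Fin n → ℝ) :
    mseFn n w p rhat (fun i => rhat i + Δ i)
      ≤ max 1 (Γ ^ 2 / Γhat ^ 2) *
          sSup (mseFn n w p rhat ''
            {r | (∀ i, 0 ≤ r i ∧ r i ≤ p i) ∧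
              (r - rhat) ⬝ᵥ (G⁻¹ *ᵥ (r - rhat)) ≤ Γhat ^ 2}) :=
  stmt_9_general n p rhat Δ G hrhat hr Γ Γhat hΓ hΓhat hΔ w
end

section
/- If Bern(w, r̂ + Δ) ≥ 0 and Γ > Γ̂ > 0, then Bern(w, r̂ + Δ) ≤ (Γ/Γ̂) · Bern(w, r̂ + (Γ̂/Γ)Δ), where Bern(w, r) := b(w)^T (r - r̂) + sqrt(2 log(1/ε) Var(w,r)) + q_max(w) log(1/ε)/3 with q_max(w) := (1/n) max_i |w_i| p_i. -/
/-!
Put `c := Γ̂/Γ ∈ (0, 1]`. The drift `b(w)ᵀΔ` is linear in `Δ`, so it scales exactly by `c`.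
The map `r ↦ r (p - r)` is concave and nonnegative at `r̂ ∈ [0, p]`, hence
`Var(w, r̂ + cΔ) ≥ c · Var(w, r̂ + Δ)` and so
`√Var(w, r̂ + Δ) ≤ c^(-1/2) √Var(w, r̂ + cΔ) ≤ c⁻¹ √Var(w, r̂ + cΔ)`.
The `q_max` term is nonnegative, so multiplying it by `1/c ≥ 1` only increases it.
-/

open Finset

namespace Bernstein

/-- `b(w)ᵀΔ`, where `Δ n, …, Δ (2n - 1)` are the last `n` coordinates of `Δ`. -/
noncomputable def drift (n : ℕ) (w Δ : ℕ → ℝ) : ℝ :=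
  (1 : ℝ) / n * ∑ i ∈ range n, w i * Δ i - (1 : ℝ) / n * ∑ i ∈ range n, Δ (n + i)

noncomputable def var (n : ℕ) (p w r : ℕ → ℝ) : ℝ :=
  (1 : ℝ) / (n : ℝ) ^ 2 * ∑ i ∈ range n, w i ^ 2 * r i * (p i - r i)

noncomputable def qMax (n : ℕ) (p w : ℕ → ℝ) : ℝ :=
  (1 : ℝ) / n * ⨆ i : Fin n, |w (i : ℕ)| * p (i : ℕ)

/-- `Bern(w, r̂ + Δ)`, parametrized by the shift `Δ` rather than by `r = r̂ + Δ`. -/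
noncomputable def bound (n : ℕ) (ε : ℝ) (p rhat w Δ : ℕ → ℝ) : ℝ :=
  drift n w Δ + √(2 * Real.log (1 / ε) * var n p w (rhat + Δ)) + qMax n p w * Real.log (1 / ε) / 3

lemma drift_smul (n : ℕ) (w Δ : ℕ → ℝ) (c : ℝ) : drift n w (c • Δ) = c * drift n w Δ := by
  simp only [drift, Pi.smul_apply, smul_eq_mul, mul_left_comm (w _), ← Finset.mul_sum]
  ring

lemma smul_mul_sub_le {r P c : ℝ} (d : ℝ) (hr : 0 ≤ r) (hrP : r ≤ P) (hc0 : 0 ≤ c) (hc1 : c ≤ 1) :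
    c * ((r + d) * (P - (r + d))) ≤ (r + c * d) * (P - (r + c * d)) := by
  have hdiff : (r + c * d) * (P - (r + c * d)) - c * ((r + d) * (P - (r + d)))
      = (1 - c) * (r * (P - r)) + c * (1 - c) * d ^ 2 := by ring
  linarith [mul_nonneg (sub_nonneg.2 hc1) (mul_nonneg hr (sub_nonneg.2 hrP)),
    mul_nonneg (mul_nonneg hc0 (sub_nonneg.2 hc1)) (sq_nonneg d)]

lemma smul_var_le_var_add_smul {n : ℕ} {p rhat : ℕ → ℝ} (w Δ : ℕ → ℝ) {c : ℝ}
    (hbox : ∀ i, 0 ≤ rhat i ∧ rhat i ≤ p i) (hc0 : 0 ≤ c) (hc1 : c ≤ 1) :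
    c * var n p w (rhat + Δ) ≤ var n p w (rhat + c • Δ) := by
  rw [var, var, mul_left_comm, Finset.mul_sum]
  refine mul_le_mul_of_nonneg_left (Finset.sum_le_sum fun i _ => ?_) (by positivity)
  have h := mul_le_mul_of_nonneg_left (smul_mul_sub_le (Δ i) (hbox i).1 (hbox i).2 hc0 hc1)
    (sq_nonneg (w i))
  simp only [Pi.add_apply, Pi.smul_apply, smul_eq_mul]
  linarith

lemma _root_.Real.sqrt_le_inv_mul_sqrt {x y c : ℝ} (hc0 : 0 < c) (hc1 : c ≤ 1) (h : c * x ≤ y) :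
    √x ≤ c⁻¹ * √y := by
  rw [le_inv_mul_iff₀ hc0]
  calc c * √x ≤ √c * √x :=
        mul_le_mul_of_nonneg_right (Real.le_sqrt_self_iff.2 hc1) (Real.sqrt_nonneg x)
    _ = √(c * x) := (Real.sqrt_mul hc0.le x).symm
    _ ≤ √y := Real.sqrt_le_sqrt h

lemma qMax_nonneg {p : ℕ → ℝ} (n : ℕ) (w : ℕ → ℝ) (hp : ∀ i, 0 ≤ p i) : 0 ≤ qMax n p w :=
  mul_nonneg (by positivity) (Real.iSup_nonneg fun i => mul_nonneg (abs_nonneg _) (hp i))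

theorem bound_le_inv_mul_bound_smul {n : ℕ} {ε : ℝ} {p rhat : ℕ → ℝ} (w Δ : ℕ → ℝ) {c : ℝ}
    (hε0 : 0 < ε) (hε1 : ε ≤ 1) (hp : ∀ i, 0 ≤ p i) (hbox : ∀ i, 0 ≤ rhat i ∧ rhat i ≤ p i)
    (hc0 : 0 < c) (hc1 : c ≤ 1) :
    bound n ε p rhat w Δ ≤ c⁻¹ * bound n ε p rhat w (c • Δ) := by
  have hlog : 0 ≤ Real.log (1 / ε) := Real.log_nonneg (one_le_one_div hε0 hε1)
  have hsqrt : √(2 * Real.log (1 / ε) * var n p w (rhat + Δ))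
      ≤ c⁻¹ * √(2 * Real.log (1 / ε) * var n p w (rhat + c • Δ)) := by
    refine Real.sqrt_le_inv_mul_sqrt hc0 hc1 ?_
    rw [mul_left_comm]
    exact mul_le_mul_of_nonneg_left (smul_var_le_var_add_smul w Δ hbox hc0.le hc1) (by positivity)
  have hq : qMax n p w * Real.log (1 / ε) / 3 ≤ c⁻¹ * (qMax n p w * Real.log (1 / ε) / 3) :=
    le_mul_of_one_le_left (by have := qMax_nonneg n w hp; positivity) (one_le_inv₀ hc0 |>.2 hc1)
  rw [bound, bound, drift_smul, mul_add, mul_add, inv_mul_cancel_left₀ hc0.ne']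
  gcongr

end Bernstein

theorem stmt_10_general (n : ℕ) (ε : ℝ) (hε0 : 0 < ε) (hε1 : ε < 1)
    (p rhat Δ : ℕ → ℝ) (w : ℕ → ℝ)
    (hp : ∀ i, 0 ≤ p i) (hbox : ∀ i, 0 ≤ rhat i ∧ rhat i ≤ p i)
    (Γ Γhat : ℝ) (hΓΓ : Γ > Γhat) (hΓhat : Γhat > 0) :
    (((1 : ℝ) / n) * ∑ i ∈ range n, w i * Δ i
        - ((1 : ℝ) / n) * ∑ i ∈ range n, Δ (n + i))
      + Real.sqrt (2 * Real.log (1 / ε) * (((1 : ℝ) / (n : ℝ) ^ 2) *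
          ∑ i ∈ range n, (w i) ^ 2 * (rhat i + Δ i) * (p i - (rhat i + Δ i))))
      + (((1 : ℝ) / n) * ⨆ i : Fin n, |w (i : ℕ)| * p (i : ℕ)) * Real.log (1 / ε) / 3
    ≤ (Γ / Γhat) *
        ((((1 : ℝ) / n) * ∑ i ∈ range n, w i * ((Γhat / Γ) * Δ i)
            - ((1 : ℝ) / n) * ∑ i ∈ range n, (Γhat / Γ) * Δ (n + i))
          + Real.sqrt (2 * Real.log (1 / ε) * (((1 : ℝ) / (n : ℝ) ^ 2) *
              ∑ i ∈ range n, (w i) ^ 2 * (rhat i + (Γhat / Γ) * Δ i) *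
                (p i - (rhat i + (Γhat / Γ) * Δ i))))
          + (((1 : ℝ) / n) * ⨆ i : Fin n, |w (i : ℕ)| * p (i : ℕ)) *
              Real.log (1 / ε) / 3) := by
  have hΓ : 0 < Γ := hΓhat.trans hΓΓ
  have h := Bernstein.bound_le_inv_mul_bound_smul (n := n) w Δ hε0 hε1.le hp hbox (div_pos hΓhat hΓ)
    ((div_le_one hΓ).2 hΓΓ.le)
  rwa [inv_div] at h

/-- Bernstein-bound scaling: if `Bern(w, r̂ + Δ) ≥ 0` and `Γ > Γ̂ > 0`, then
`Bern(w, r̂ + Δ) ≤ (Γ/Γ̂)·Bern(w, r̂ + (Γ̂/Γ)Δ)`. -/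
theorem stmt_10 (n : ℕ) (hn : 1 ≤ n) (ε : ℝ) (hε0 : 0 < ε) (hε1 : ε < 1)
    (p rhat Δ : ℕ → ℝ) (w : ℕ → ℝ)
    (hp : ∀ i, 0 ≤ p i) (hbox : ∀ i, 0 ≤ rhat i ∧ rhat i ≤ p i)
    (Γ Γhat : ℝ) (hΓΓ : Γ > Γhat) (hΓhat : Γhat > 0)
    (hnonneg :
      0 ≤ (((1 : ℝ) / n) * ∑ i ∈ range n, w i * Δ i
            - ((1 : ℝ) / n) * ∑ i ∈ range n, Δ (n + i))
          + Real.sqrt (2 * Real.log (1 / ε) * (((1 : ℝ) / (n : ℝ) ^ 2) *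
              ∑ i ∈ range n, (w i) ^ 2 * (rhat i + Δ i) * (p i - (rhat i + Δ i))))
          + (((1 : ℝ) / n) * ⨆ i : Fin n, |w (i : ℕ)| * p (i : ℕ)) * Real.log (1 / ε) / 3) :
    (((1 : ℝ) / n) * ∑ i ∈ range n, w i * Δ i
        - ((1 : ℝ) / n) * ∑ i ∈ range n, Δ (n + i))
      + Real.sqrt (2 * Real.log (1 / ε) * (((1 : ℝ) / (n : ℝ) ^ 2) *
          ∑ i ∈ range n, (w i) ^ 2 * (rhat i + Δ i) * (p i - (rhat i + Δ i))))
      + (((1 : ℝ) / n) * ⨆ i : Fin n, |w (i : ℕ)| * p (i : ℕ)) * Real.log (1 / ε) / 3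
    ≤ (Γ / Γhat) *
        ((((1 : ℝ) / n) * ∑ i ∈ range n, w i * ((Γhat / Γ) * Δ i)
            - ((1 : ℝ) / n) * ∑ i ∈ range n, (Γhat / Γ) * Δ (n + i))
          + Real.sqrt (2 * Real.log (1 / ε) * (((1 : ℝ) / (n : ℝ) ^ 2) *
              ∑ i ∈ range n, (w i) ^ 2 * (rhat i + (Γhat / Γ) * Δ i) *
                (p i - (rhat i + (Γhat / Γ) * Δ i))))
          + (((1 : ℝ) / n) * ⨆ i : Fin n, |w (i : ℕ)| * p (i : ℕ)) *
              Real.log (1 / ε) / 3) :=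
  stmt_10_general n ε hε0 hε1 p rhat Δ w hp hbox Γ Γhat hΓΓ hΓhat
end
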